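/- arXiv:math/0004158 — 2 statements merged into one kernel-verified Lean document; each statement's English description precedes it below -/
import Mathlib

section
/- In the quantum torus, the noncommutative cosines c_{p,q} := e_{p,q} + e_{−p,−q} satisfy the product-to-sum formula c_{p,q} · c_{r,s} = t^{ps−qr} c_{p+r,q+s} + t^{−(ps−qr)} c_{p−r,q−s} for all integers p, q, r, s. -/
open LaurentPolynomial

/-- Noncommutative exponentials `e_{p,q} = t^{-pq} l^p m^q` in the quantum torus. -/
noncomputable def qe {A : Type*} [Ring A] [Algebra (LaurentPolynomial ℂ) A]
    (l m : Aˣ) (p q : ℤ) : A :=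
  algebraMap (LaurentPolynomial ℂ) A (T (-(p * q))) * ((l ^ p * m ^ q : Aˣ) : A)

/-- Noncommutative cosines `c_{p,q} = e_{p,q} + e_{-p,-q}`. -/
noncomputable def qc {A : Type*} [Ring A] [Algebra (LaurentPolynomial ℂ) A]
    (l m : Aˣ) (p q : ℤ) : A :=
  qe l m p q + qe l m (-p) (-q)

section
variable {A : Type*} [Ring A] [Algebra (LaurentPolynomial ℂ) A]

noncomputable def tU (n : ℤ) : Aˣ where
  val := algebraMap (LaurentPolynomial ℂ) A (T n)
  inv := algebraMap (LaurentPolynomial ℂ) A (T (-n))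
  val_inv := by rw [← map_mul, ← T_add, add_neg_cancel, T_zero, map_one]
  inv_val := by rw [← map_mul, ← T_add, neg_add_cancel, T_zero, map_one]

@[simp] lemma tU_val (n : ℤ) : ((tU n : Aˣ) : A) = algebraMap (LaurentPolynomial ℂ) A (T n) := rfl

lemma tU_zero : (tU 0 : Aˣ) = 1 := by
  ext; rw [tU_val, T_zero, map_one, Units.val_one]

lemma tU_mul (a b : ℤ) : (tU a : Aˣ) * tU b = tU (a + b) := by
  ext; rw [Units.val_mul, tU_val, tU_val, tU_val, ← map_mul, ← T_add]

lemma tU_comm (a : ℤ) (x : Aˣ) : (tU a : Aˣ) * x = x * tU a := by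
  ext; rw [Units.val_mul, Units.val_mul, tU_val, Algebra.commutes]

lemma tU_commute (a : ℤ) (x : Aˣ) : Commute (tU a : Aˣ) x := tU_comm a x

lemma tU_zpow (a n : ℤ) : ((tU a : Aˣ)) ^ n = tU (n * a) := by
  let f : Multiplicative ℤ →* Aˣ :=
    { toFun := fun x => tU x.toAdd
      map_one' := tU_zero
      map_mul' := fun a b => (tU_mul _ _).symm }
  have h1 : ((tU a : Aˣ)) ^ n = f ((Multiplicative.ofAdd a) ^ n) := by
    rw [map_zpow]; rfl
  have h2 : (Multiplicative.ofAdd a) ^ n = Multiplicative.ofAdd (n * a) := by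
    rw [← ofAdd_zsmul, smul_eq_mul]
  rw [h1, h2]; rfl

lemma tU_left_comm (a : ℤ) (x y : Aˣ) : x * (tU a * y) = tU a * (x * y) := by
  rw [← mul_assoc, ← tU_comm, mul_assoc]

lemma conj_zpow_eq (x y : Aˣ) (c : ℤ) (hxy : x * y = tU c * (y * x)) (n : ℤ) :
    x * y ^ n = tU (n * c) * (y ^ n * x) := by
  have hconj : x * y * x⁻¹ = tU c * y := by
    rw [hxy, mul_assoc, mul_assoc, mul_inv_cancel, mul_one]
  have key : x * y ^ n * x⁻¹ = tU (n * c) * y ^ n := by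
    have h1 : x * y ^ n * x⁻¹ = (x * y * x⁻¹) ^ n := by
      have := map_zpow (MulAut.conj x) y n
      simpa [MulAut.conj_apply, mul_assoc] using this
    rw [h1, hconj, (tU_commute c y).mul_zpow, tU_zpow]
  calc x * y ^ n = x * y ^ n * x⁻¹ * x := by rw [inv_mul_cancel_right]
    _ = tU (n * c) * (y ^ n * x) := by rw [key, mul_assoc]

lemma qe_eq (l m : Aˣ) (p q : ℤ) :
    qe l m p q = ((tU (-(p * q)) * (l ^ p * m ^ q) : Aˣ) : A) := by
  rw [Units.val_mul, tU_val, qe]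

lemma qe_mul (l m : Aˣ)
    (h : (l : A) * m = algebraMap (LaurentPolynomial ℂ) A (T 2) * ((m : A) * l))
    (p q r s : ℤ) :
    qe l m p q * qe l m r s =
      algebraMap (LaurentPolynomial ℂ) A (T (p * s - q * r)) * qe l m (p + r) (q + s) := by
  have hU : (l : Aˣ) * m = tU 2 * (m * l) := by
    ext; simpa [Units.val_mul] using h
  have hml : (m : Aˣ) * l = tU (-2) * (l * m) := by
    rw [hU, ← mul_assoc, tU_mul, show (-2 : ℤ) + 2 = 0 by ring, tU_zero, one_mul]
  have c1 := conj_zpow_eq m l (-2) hml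
  have c2 : ∀ r : ℤ, (l : Aˣ) ^ r * m = tU (2 * r) * (m * l ^ r) := by
    intro r
    rw [c1 r, ← mul_assoc, tU_mul, show 2 * r + r * (-2) = 0 by ring, tU_zero, one_mul]
  have cML : ∀ q r : ℤ, (m : Aˣ) ^ q * l ^ r = tU (-(2 * q * r)) * (l ^ r * m ^ q) := by
    intro q r
    have c3 := conj_zpow_eq (l ^ r) m (2 * r) (c2 r) q
    rw [c3, ← mul_assoc, tU_mul, show -(2 * q * r) + q * (2 * r) = 0 by ring, tU_zero, one_mul]
  have main : (tU (-(p * q)) * (l ^ p * m ^ q) : Aˣ) * (tU (-(r * s)) * (l ^ r * m ^ s))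
      = tU (p * s - q * r) * (tU (-((p + r) * (q + s))) * (l ^ (p + r) * m ^ (q + s))) := by
    calc (tU (-(p * q)) * (l ^ p * m ^ q) : Aˣ) * (tU (-(r * s)) * (l ^ r * m ^ s))
        = tU (-(p * q)) * (l ^ p * (m ^ q * (tU (-(r * s)) * (l ^ r * m ^ s)))) := by
          simp only [mul_assoc]
      _ = tU (-(p * q)) * (tU (-(r * s)) * (l ^ p * (m ^ q * (l ^ r * m ^ s)))) := by
          rw [tU_left_comm _ (m ^ q), tU_left_comm _ ((l : Aˣ) ^ p)]
      _ = tU (-(p * q)) * (tU (-(r * s)) * (l ^ p * ((tU (-(2 * q * r)) * (l ^ r * m ^ q)) * m ^ s))) := by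
          rw [← mul_assoc ((m : Aˣ) ^ q), cML]
      _ = tU (-(p * q)) * (tU (-(r * s)) * (tU (-(2 * q * r)) * (l ^ p * (l ^ r * (m ^ q * m ^ s))))) := by
          simp only [mul_assoc]
          rw [tU_left_comm _ ((l : Aˣ) ^ p)]
      _ = tU (-(p * q) + (-(r * s) + -(2 * q * r))) * (l ^ (p + r) * m ^ (q + s)) := by
          rw [← mul_assoc (tU (-(r * s))), tU_mul, ← mul_assoc (tU (-(p * q))), tU_mul,
              ← mul_assoc ((l : Aˣ) ^ p), ← zpow_add, ← zpow_add]
      _ = tU (p * s - q * r) * (tU (-((p + r) * (q + s))) * (l ^ (p + r) * m ^ (q + s))) := by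
          rw [← mul_assoc (tU (p * s - q * r)), tU_mul,
              show p * s - q * r + -((p + r) * (q + s)) = -(p * q) + (-(r * s) + -(2 * q * r)) by
                ring]
  rw [qe_eq, qe_eq, ← Units.val_mul, main, qe_eq, Units.val_mul, Units.val_mul, tU_val, tU_val]

end

/-- In the quantum torus, the noncommutative cosines satisfy the product-to-sum
formula `c_{p,q} · c_{r,s} = t^{ps-qr} c_{p+r,q+s} + t^{-(ps-qr)} c_{p-r,q-s}`. -/
theorem quantum_torus_cos_mul {A : Type*} [Ring A] [Algebra (LaurentPolynomial ℂ) A]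
    (l m : Aˣ)
    (h : (l : A) * m = algebraMap (LaurentPolynomial ℂ) A (T 2) * ((m : A) * l)) :
    ∀ p q r s : ℤ,
      qc l m p q * qc l m r s =
        algebraMap (LaurentPolynomial ℂ) A (T (p * s - q * r)) * qc l m (p + r) (q + s) +
          algebraMap (LaurentPolynomial ℂ) A (T (-(p * s - q * r))) * qc l m (p - r) (q - s) := by
  intro p q r s
  simp only [qc, add_mul, mul_add, qe_mul l m h,
    show p * -s - q * -r = -(p * s - q * r) from by ring,
    show -p * s - -q * r = -(p * s - q * r) from by ring,
    show -p * -s - -q * -r = p * s - q * r from by ring,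
    show p + -r = p - r from by ring, show q + -s = q - s from by ring,
    show -p + r = -(p - r) from by ring, show -q + s = -(q - s) from by ring,
    show -p + -r = -(p + r) from by ring, show -q + -s = -(q + s) from by ring]
  abel
end

section
/- In the quantum torus with lm = t²ml, for any integers p, q, n, the element c_{p,q}·(e_{n,0} + e_{−n,0}) expands as t^{nq} c_{p+n,q} + t^{−nq} c_{p−n,q}, and consequently the span over ℂ[t,t⁻¹] of the noncommutative cosines {c_{p,q} : p ≥ 0, q ∈ ℤ} is closed under multiplication. -/
open LaurentPolynomial

/-!
Conjugation by `l` acts on `m` as multiplication by the central unit `t²`, so in the group of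
units `l^p m^q = t^{2pq} m^q l^p`. Hence `e_{p,q} e_{r,s} = t^{ps-qr} e_{p+r,q+s}`, and expanding
the product of two cosines pairs the four resulting terms into two cosines. As `c_{-p,-q} = c_{p,q}`,
every cosine lies in the span of those with `p ≥ 0`, so this span contains the products of its
generators and is therefore closed under multiplication.
-/

section QuasiCommuting

variable {G : Type*} [Group G] {a b u : G}

theorem mul_zpow_eq_of_mul_eq (hub : Commute u b) (h : a * b = u * (b * a)) (q : ℤ) :
    a * b ^ q = u ^ q * (b ^ q * a) := by
  have hsemi : SemiconjBy a b (u * b) := h.trans (mul_assoc u b a).symm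
  rw [hsemi.zpow_right q, hub.mul_zpow, mul_assoc]

theorem zpow_mul_zpow_eq_of_mul_eq (hua : Commute u a) (hub : Commute u b)
    (h : a * b = u * (b * a)) (p q : ℤ) :
    a ^ p * b ^ q = u ^ (p * q) * (b ^ q * a ^ p) := by
  have hba : b * a = u⁻¹ * (a * b) := by rw [h, inv_mul_cancel_left]
  have hpow : a ^ p * b = u ^ p * (b * a ^ p) := by
    rw [mul_zpow_eq_of_mul_eq hua.inv_left hba p, ← mul_assoc, inv_zpow', zpow_neg,
      mul_inv_cancel, one_mul]
  rw [mul_zpow_eq_of_mul_eq (hub.zpow_left p) hpow q, zpow_mul]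

end QuasiCommuting

noncomputable def unitsT (R A : Type*) [CommSemiring R] [Semiring A] [Algebra R[T;T⁻¹] A] :
    Multiplicative ℤ →* Aˣ :=
  ((algebraMap R[T;T⁻¹] A : R[T;T⁻¹] →* A).comp (AddMonoidAlgebra.of R ℤ)).toHomUnits

section UnitsT

variable {R A : Type*} [CommSemiring R] [Semiring A] [Algebra R[T;T⁻¹] A]

theorem val_unitsT (n : ℤ) :
    (unitsT R A (.ofAdd n) : A) = algebraMap R[T;T⁻¹] A (T n) := rfl

theorem unitsT_zpow (n k : ℤ) : unitsT R A (.ofAdd n) ^ k = unitsT R A (.ofAdd (k * n)) := by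
  rw [← map_zpow, ← ofAdd_zsmul, smul_eq_mul]

theorem commute_unitsT (n : Multiplicative ℤ) (x : Aˣ) : Commute (unitsT R A n) x :=
  Units.ext (Algebra.commutes _ _)

end UnitsT

noncomputable def cosineSpan {A : Type*} [Ring A] [Algebra (LaurentPolynomial ℂ) A] (l m : Aˣ) :
    Submodule (LaurentPolynomial ℂ) A :=
  Submodule.span (LaurentPolynomial ℂ) {z : A | ∃ p q : ℤ, 0 ≤ p ∧ z = qc l m p q}

section QuantumTorus

variable {A : Type*} [Ring A] [Algebra (LaurentPolynomial ℂ) A] {l m : Aˣ}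

theorem qe_eq_smul (p q : ℤ) :
    qe l m p q = (T (-(p * q)) : LaurentPolynomial ℂ) • ((l ^ p * m ^ q : Aˣ) : A) :=
  (Algebra.smul_def _ _).symm

theorem qc_neg_neg (p q : ℤ) : qc l m (-p) (-q) = qc l m p q := by
  rw [qc, qc, neg_neg, neg_neg, add_comm]

theorem qc_mem_cosineSpan (p q : ℤ) : qc l m p q ∈ cosineSpan l m := by
  rcases le_or_gt 0 p with hp | hp
  · exact Submodule.subset_span ⟨p, q, hp, rfl⟩
  · rw [← qc_neg_neg]
    exact Submodule.subset_span ⟨-p, -q, by omega, rfl⟩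

variable (h : (l : A) * m = algebraMap (LaurentPolynomial ℂ) A (T 2) * ((m : A) * l))
include h

theorem zpow_mul_zpow_swap (q r : ℤ) :
    m ^ q * l ^ r = unitsT ℂ A (.ofAdd (-2 * q * r)) * (l ^ r * m ^ q) := by
  have hml : m * l = unitsT ℂ A (.ofAdd (-2)) * (l * m) := by
    ext
    rw [Units.val_mul, Units.val_mul, Units.val_mul, val_unitsT, h, ← mul_assoc, ← map_mul,
      ← T_add, neg_add_cancel, T_zero, map_one, one_mul]
  rw [zpow_mul_zpow_eq_of_mul_eq (commute_unitsT _ _) (commute_unitsT _ _) hml, unitsT_zpow]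
  ring_nf

theorem qe_mul_qe (p q r s : ℤ) :
    qe l m p q * qe l m r s =
      algebraMap (LaurentPolynomial ℂ) A (T (p * s - q * r)) * qe l m (p + r) (q + s) := by
  have hunits : (l ^ p * m ^ q) * (l ^ r * m ^ s) =
      unitsT ℂ A (.ofAdd (-2 * q * r)) * (l ^ (p + r) * m ^ (q + s)) := by
    rw [zpow_add, zpow_add, mul_assoc, ← mul_assoc (m ^ q), zpow_mul_zpow_swap h]
    simp only [mul_assoc]
    rw [← (commute_unitsT _ (l ^ p)).left_comm]
  rw [qe_eq_smul, qe_eq_smul, qe_eq_smul, smul_mul_smul_comm, ← Units.val_mul, hunits,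
    Units.val_mul, val_unitsT, ← Algebra.smul_def, smul_smul, ← Algebra.smul_def, smul_smul,
    ← T_add, ← T_add, ← T_add]
  congr 2
  ring

theorem qc_mul_qc (p q r s : ℤ) :
    qc l m p q * qc l m r s =
      algebraMap (LaurentPolynomial ℂ) A (T (p * s - q * r)) * qc l m (p + r) (q + s) +
        algebraMap (LaurentPolynomial ℂ) A (T (q * r - p * s)) * qc l m (p - r) (q - s) := by
  simp only [qc, add_mul, mul_add, qe_mul_qe h]
  ring_nf
  abel

theorem qc_mul_qc_mem_cosineSpan (p q r s : ℤ) : qc l m p q * qc l m r s ∈ cosineSpan l m := by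
  rw [qc_mul_qc h, ← Algebra.smul_def, ← Algebra.smul_def]
  exact add_mem (Submodule.smul_mem _ _ (qc_mem_cosineSpan _ _))
    (Submodule.smul_mem _ _ (qc_mem_cosineSpan _ _))

theorem mul_mem_cosineSpan {x y : A} (hx : x ∈ cosineSpan l m) (hy : y ∈ cosineSpan l m) :
    x * y ∈ cosineSpan l m := by
  have hmul : cosineSpan l m * cosineSpan l m ≤ cosineSpan l m := by
    rw [cosineSpan, Submodule.span_mul_span, Submodule.span_le]
    rintro _ ⟨_, ⟨p, q, -, rfl⟩, _, ⟨r, s, -, rfl⟩, rfl⟩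
    exact qc_mul_qc_mem_cosineSpan h p q r s
  exact hmul (Submodule.mul_mem_mul hx hy)

end QuantumTorus

/-- In the quantum torus, the noncommutative cosines satisfy the product-to-sum
formula, and consequently the `ℂ[t,t⁻¹]`-span of the cosines `c_{p,q}` with
`p ≥ 0` is closed under multiplication. -/
theorem quantum_torus_cos_span_mul_closed {A : Type*} [Ring A]
    [Algebra (LaurentPolynomial ℂ) A] (l m : Aˣ)
    (h : (l : A) * m = algebraMap (LaurentPolynomial ℂ) A (T 2) * ((m : A) * l)) :
    (∀ p q r s : ℤ,
      qc l m p q * qc l m r s =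
        algebraMap (LaurentPolynomial ℂ) A (T (p * s - q * r)) * qc l m (p + r) (q + s) +
          algebraMap (LaurentPolynomial ℂ) A (T (q * r - p * s)) * qc l m (p - r) (q - s)) ∧
    (∀ x y : A,
      x ∈ Submodule.span (LaurentPolynomial ℂ) {z : A | ∃ p q : ℤ, 0 ≤ p ∧ z = qc l m p q} →
      y ∈ Submodule.span (LaurentPolynomial ℂ) {z : A | ∃ p q : ℤ, 0 ≤ p ∧ z = qc l m p q} →
      x * y ∈ Submodule.span (LaurentPolynomial ℂ) {z : A | ∃ p q : ℤ, 0 ≤ p ∧ z = qc l m p q}) :=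
  ⟨qc_mul_qc h, fun _ _ => mul_mem_cosineSpan h⟩
end
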